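/- arXiv:1001.1033 — 5 statements merged into one kernel-verified Lean document; each statement's English description precedes it below -/
import Mathlib

section
/- For every 1 ≤ i ≤ r there exists a unique vertex t ∉ D with t > x_i such that ℓ(x_i, t) = 0 and ℓ(x_i, s) > 0 for every vertex s ∉ D with x_i < s < t. In particular, the right move R_i is well defined and moves the i-th × to this uniquely determined vertex t. -/
/-! Starting from `ℓ(a, a+1) = 0`, the walk `s ↦ ℓ(a, s)` moves up by one at each × and down by
one at each empty vertex, and it eventually becomes negative because `D` is finite. The target
of the right move is the vertex at which the walk first steps below zero: there the walk is at
`0` and steps down, so the vertex is empty, and every earlier empty vertex steps down to a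
nonnegative value, so the walk was positive there. Any other such vertex would contradict the
positivity condition of the earlier one. -/

/-- Number of elements of `D` strictly between `s` and `t`. -/
noncomputable def crossCount (D : Finset ℤ) (s t : ℤ) : ℕ :=
  ((Finset.Ioo s t).filter (fun z => z ∈ D)).card

/-- `ℓ(s,t)`: the number of elements of `D` strictly between `s` and `t` minus the
number of integers strictly between `s` and `t` that are not in `D`. -/
noncomputable def ell (D : Finset ℤ) (s t : ℤ) : ℤ :=
  (crossCount D s t : ℤ) - (((Finset.Ioo s t).filter (fun z => z ∉ D)).card : ℤ)

/-- `t` is the target vertex of the right move `R_i` on the diagram `D` with ×'s at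
`x 0 < x 1 < ⋯`: `t ∉ D`, `t > x_i`, `ℓ(x_i,t) = 0`, and `ℓ(x_i,s) > 0` for every
empty vertex `s` with `x_i < s < t`. -/
def IsRightMoveTarget (r : ℕ) (D : Finset ℤ) (x : Fin r → ℤ) (i : Fin r) (t : ℤ) : Prop :=
  t ∉ D ∧ x i < t ∧ ell D (x i) t = 0 ∧
    ∀ s : ℤ, s ∉ D → x i < s → s < t → 0 < ell D (x i) s

section

variable (D : Finset ℤ)

theorem ell_self_add_one (a : ℤ) : ell D a (a + 1) = 0 := by
  simp [ell, crossCount, Finset.Ioo_add_one_right_eq_Ioc]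

theorem ell_add_one {a t : ℤ} (h : a < t) :
    ell D a (t + 1) = ell D a t + if t ∈ D then 1 else -1 := by
  have htI : t ∉ Finset.Ioo a t := by simp
  rw [ell, crossCount, Finset.Ioo_add_one_right_eq_Ioc, ← Finset.Ioo_insert_right h,
    Finset.filter_insert, Finset.filter_insert]
  split_ifs <;>
  · rw [Finset.card_insert_of_notMem (by simp [htI])]
    simp only [ell, crossCount]
    push_cast
    ring

theorem ell_le (a t : ℤ) : ell D a t ≤ 2 * D.card - (t - a - 1) := by
  have hcross : crossCount D a t ≤ D.card :=
    Finset.card_le_card fun z hz => (Finset.mem_filter.mp hz).2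
  have hsplit := Finset.card_filter_add_card_filter_not (s := Finset.Ioo a t) (p := (· ∈ D))
  have hIoo : (Finset.Ioo a t).card = (t - a - 1).toNat := Int.card_Ioo a t
  unfold ell crossCount at *
  omega

theorem existsUnique_ell_first_zero (a : ℤ) :
    ∃! t : ℤ, t ∉ D ∧ a < t ∧ ell D a t = 0 ∧
      ∀ s : ℤ, s ∉ D → a < s → s < t → 0 < ell D a s := by
  obtain ⟨t, ⟨hat, hneg⟩, hleast⟩ :=
    Int.exists_least_of_bdd (P := fun t => a < t ∧ ell D a (t + 1) < 0) ⟨a, fun _ h => h.1.le⟩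
      ⟨a + 2 * D.card + 1, by omega, by linarith [ell_le D a (a + 2 * D.card + 1 + 1)]⟩
  have hnonneg : ∀ s, a < s → s < t → 0 ≤ ell D a (s + 1) := fun s has hst =>
    not_lt.mp fun h => (hleast s ⟨has, h⟩).not_gt hst
  have ht : 0 ≤ ell D a t := by
    rcases (Int.add_one_le_of_lt hat).eq_or_lt with h | h
    · rw [← h, ell_self_add_one]
    · simpa using hnonneg (t - 1) (by omega) (by omega)
  have htD : t ∉ D := fun h => by
    have := ell_add_one D hat
    rw [if_pos h] at this
    omega
  have hzero : ell D a t = 0 := by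
    have := ell_add_one D hat
    rw [if_neg htD] at this
    omega
  have hpos : ∀ s, s ∉ D → a < s → s < t → 0 < ell D a s := fun s hsD has hst => by
    have := ell_add_one D has
    rw [if_neg hsD] at this
    linarith [hnonneg s has hst]
  refine ⟨t, ⟨htD, hat, hzero, hpos⟩, ?_⟩
  rintro t' ⟨ht'D, hat', hzero', hpos'⟩
  rcases lt_trichotomy t' t with h | h | h
  · exact absurd hzero' (hpos t' ht'D hat' h).ne'
  · exact h
  · exact absurd hzero (hpos' t htD hat h).ne'

end

theorem rightMove_target_existsUnique_general
    (r : ℕ) (D : Finset ℤ)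
    (x : Fin r → ℤ)
    (i : Fin r) :
    ∃! t : ℤ, IsRightMoveTarget r D x i t :=
  existsUnique_ell_first_zero D (x i)

/-- For every `1 ≤ i ≤ r` there is a unique vertex `t ∉ D` with `t > x_i`, `ℓ(x_i,t) = 0`
and `ℓ(x_i,s) > 0` for all empty vertices `s` with `x_i < s < t`; i.e. the right move
`R_i` is well defined. -/
theorem rightMove_target_existsUnique
    (r : ℕ) (hr : 1 ≤ r) (D : Finset ℤ) (hD : D.card = r)
    (x : Fin r → ℤ) (hx : StrictMono x) (hxD : ∀ z : ℤ, z ∈ D ↔ ∃ i, x i = z)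
    (i : Fin r) :
    ∃! t : ℤ, IsRightMoveTarget r D x i t :=
  rightMove_target_existsUnique_general r D x i
end

section
/- Every path on D can be written in exactly one way as a disjoint sum P_1 P_2 ⋯ P_s of indecomposable paths on D (the blocks of the path): there is a unique partition of the sequence of left moves into consecutive segments such that each segment is an indecomposable path and consecutive segments are disjoint. -/
/-- `s` is a target vertex for the left move `L_{i,j}` on the diagram `D`. -/
def IsLeftMoveTarget (r : ℕ) (D : Finset ℤ) (x : Fin r → ℤ) (i j : Fin r) (s : ℤ) : Prop :=
  i ≤ j ∧ s ∉ D ∧ s < x j ∧ ell D s (x j) = 0 ∧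
    crossCount D s (x j) = (j : ℕ) - (i : ℕ)

/-- A path on `D`. -/
def IsPath (r : ℕ) (D : Finset ℤ) (x : Fin r → ℤ) {k : ℕ}
    (iseq jseq : Fin k → Fin r) (sseq : Fin k → ℤ) : Prop :=
  StrictMono jseq ∧
  (∀ a b : Fin k, a < b → iseq b ≤ jseq a → iseq b ≤ iseq a) ∧
  (∀ b : Fin k, ∀ p : Fin r, iseq b ≤ p → p < jseq b →
      0 ≤ ell D (x p) (x (jseq b)) → ∃ a : Fin k, a < b ∧ jseq a = p) ∧
  (∀ a : Fin k, IsLeftMoveTarget r D x (iseq a) (jseq a) (sseq a)) ∧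
  Function.Injective sseq

/-- The consecutive segment `[c₁, c₂)` of a `Fin k`-indexed sequence. -/
def seg {α : Type*} {k : ℕ} (f : Fin k → α) (c₁ c₂ : ℕ) (h : c₂ ≤ k) :
    Fin (c₂ - c₁) → α :=
  fun b => f ⟨c₁ + b.1, by have hb := b.2; omega⟩

/-- `c₁` and `c₂` are consecutive elements of the finite set `C`. -/
def ConsecutiveIn (C : Finset ℕ) (c₁ c₂ : ℕ) : Prop :=
  c₁ ∈ C ∧ c₂ ∈ C ∧ c₁ < c₂ ∧ ∀ c ∈ C, ¬(c₁ < c ∧ c < c₂)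

/-- `C` is the set of cut points of a partition of the sequence of left moves
`(L_{i_a,j_a})_{a < k}` into consecutive segments, each of which is an indecomposable
path on `D`, consecutive segments being disjoint. -/
def IsBlockDecomp (r : ℕ) (D : Finset ℤ) (x : Fin r → ℤ) {k : ℕ}
    (iseq jseq : Fin k → Fin r) (sseq : Fin k → ℤ) (C : Finset ℕ) : Prop :=
  (∀ c ∈ C, c ≤ k) ∧ 0 ∈ C ∧ k ∈ C ∧
  -- each segment between consecutive cut points is an indecomposable path
  (∀ c₁ c₂ : ℕ, ConsecutiveIn C c₁ c₂ → ∀ (h : c₂ ≤ k),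
      IsPath r D x (seg iseq c₁ c₂ h) (seg jseq c₁ c₂ h) (seg sseq c₁ c₂ h) ∧
      ∀ (h1 : c₁ < c₂), iseq ⟨c₂ - 1, by omega⟩ ≤ iseq ⟨c₁, by omega⟩) ∧
  -- consecutive segments are disjoint: the last `j` of a segment is smaller than
  -- every `i` of the next segment
  (∀ c₁ c₂ c₃ : ℕ, ConsecutiveIn C c₁ c₂ → ConsecutiveIn C c₂ c₃ →
      ∀ (h2 : c₂ ≤ k) (h1 : c₁ < c₂) (q : ℕ) (hq : q < k), c₂ ≤ q → q < c₃ →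
        jseq ⟨c₂ - 1, by omega⟩ < iseq ⟨q, hq⟩)

/-!
Call a position `c` a cut if every move before `c` is disjoint from every move at or after
`c`. The blocks of a path are forced to be the segments between consecutive cuts. Any
decomposition cuts only at cuts, since `j` increases and consecutive blocks are disjoint; and
it cuts at every cut, since a cut strictly inside a block would separate its last move from its
first one although `i_last ≤ i_first ≤ j_first`. Conversely, between two consecutive cuts the
inequality `i_last ≤ i_first` holds, because the intervals `[i_a, j_a]` of a path form a
laminar family: walking leftwards through overlapping moves never lets the left endpoint
drop below `i_last`.
-/

section Cuts

variable {α : Type*} [LinearOrder α] {k : ℕ}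

def IsCut (i j : Fin k → α) (c : ℕ) : Prop :=
  ∀ a b : Fin k, (a : ℕ) < c → c ≤ (b : ℕ) → j a < i b

open Classical in
noncomputable def cuts (i j : Fin k → α) : Finset ℕ :=
  (Finset.range (k + 1)).filter (IsCut i j)

theorem mem_cuts {i j : Fin k → α} {c : ℕ} : c ∈ cuts i j ↔ c ≤ k ∧ IsCut i j c := by
  simp [cuts]

/-- Ordered by right endpoint, two intervals `[i a, j a]` and `[i b, j b]` with `a < b` are
either disjoint or the later one contains the earlier one. -/
structure IsLaminar (i j : Fin k → α) : Prop where
  monotone : Monotone j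
  le : ∀ a, i a ≤ j a
  nested : ∀ a b, a < b → i b ≤ j a → i b ≤ i a

theorem IsLaminar.nested_of_le {i j : Fin k → α} (hL : IsLaminar i j) {a b : Fin k}
    (hab : a ≤ b) (h : i b ≤ j a) : i b ≤ i a :=
  hab.eq_or_lt.elim (fun h => h ▸ le_rfl) (fun hlt => hL.nested a b hlt h)

theorem exists_overlap_of_not_isCut {i j : Fin k → α} {c₁ c c₂ : ℕ} (hc₁ : IsCut i j c₁)
    (hc₂ : IsCut i j c₂) (h₁ : c₁ ≤ c) (h₂ : c ≤ c₂) (hc : ¬IsCut i j c) :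
    ∃ a b : Fin k, c₁ ≤ (a : ℕ) ∧ (a : ℕ) < c ∧ c ≤ (b : ℕ) ∧ (b : ℕ) < c₂ ∧ i b ≤ j a := by
  simp only [IsCut, not_forall, not_lt] at hc
  obtain ⟨a, b, ha, hb, hab⟩ := hc
  refine ⟨a, b, ?_, ha, hb, ?_, hab⟩
  · by_contra h
    exact (hc₁ a b (by omega) (by omega)).not_ge hab
  · by_contra h
    exact (hc₂ a b (by omega) (by omega)).not_ge hab

theorem IsLaminar.le_of_no_cut_between {i j : Fin k → α} (hL : IsLaminar i j) {c₁ c₂ : ℕ}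
    (hc₁ : IsCut i j c₁) (hc₂ : IsCut i j c₂) (hlt : c₁ < c₂)
    (hno : ∀ c, c₁ < c → c < c₂ → ¬IsCut i j c) (a b : Fin k) (ha : (a : ℕ) = c₁)
    (hb : (b : ℕ) + 1 = c₂) : i b ≤ i a := by
  suffices key : ∀ a' : Fin k, c₁ ≤ a' → a' ≤ b → i b ≤ i a' → i b ≤ i a from
    key b (by omega) le_rfl le_rfl
  intro a'
  induction a' using WellFoundedLT.induction with
  | _ a' ih =>
    intro h₁ h₂ hba'
    rcases h₁.eq_or_lt with h | h
    · rwa [show a = a' from Fin.ext (ha.trans h)]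
    obtain ⟨a₂, b₂, ha₂, ha₂', hb₂, hb₂', hov⟩ :=
      exists_overlap_of_not_isCut hc₁ hc₂ h.le (by omega) (hno a' h (by omega))
    -- `[i a', j a']` reaches `i b` and `b₂ ≥ a'`, so `[i b₂, j b₂]` does too
    have hb_b₂ : i b ≤ i b₂ :=
      hL.nested_of_le (by omega) (hba'.trans ((hL.le a').trans (hL.monotone (by omega))))
    exact ih a₂ ha₂' ha₂ (by omega) (hb_b₂.trans (hL.nested a₂ b₂ (by omega) hov))

end Cuts

theorem exists_consecutiveIn {C : Finset ℕ} {c₁ c₂ c : ℕ} (h₁ : c₁ ∈ C) (h₂ : c₂ ∈ C)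
    (hc₁ : c₁ ≤ c) (hc₂ : c < c₂) : ∃ d₁ d₂, ConsecutiveIn C d₁ d₂ ∧ d₁ ≤ c ∧ c < d₂ := by
  have hlo : (C.filter (· ≤ c)).Nonempty := ⟨c₁, Finset.mem_filter.2 ⟨h₁, hc₁⟩⟩
  have hhi : (C.filter (c < ·)).Nonempty := ⟨c₂, Finset.mem_filter.2 ⟨h₂, hc₂⟩⟩
  obtain ⟨hd₁C, hd₁⟩ := Finset.mem_filter.1 (Finset.max'_mem _ hlo)
  obtain ⟨hd₂C, hd₂⟩ := Finset.mem_filter.1 (Finset.min'_mem _ hhi)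
  refine ⟨_, _, ⟨hd₁C, hd₂C, hd₁.trans_lt hd₂, fun e he ⟨he₁, he₂⟩ => ?_⟩, hd₁, hd₂⟩
  rcases le_or_gt e c with h | h
  · exact he₁.not_ge (Finset.le_max' _ e (Finset.mem_filter.2 ⟨he, h⟩))
  · exact he₂.not_ge (Finset.min'_le _ e (Finset.mem_filter.2 ⟨he, h⟩))

section Paths

variable {r : ℕ} {D : Finset ℤ} {x : Fin r → ℤ} {k : ℕ} {iseq jseq : Fin k → Fin r}
  {sseq : Fin k → ℤ}

theorem IsPath.isLaminar (hP : IsPath r D x iseq jseq sseq) : IsLaminar iseq jseq :=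
  ⟨hP.1.monotone, fun a => (hP.2.2.2.1 a).1, hP.2.1⟩

theorem IsPath.seg_of_isCut (hP : IsPath r D x iseq jseq sseq) {c₁ : ℕ}
    (hc₁ : IsCut iseq jseq c₁) (c₂ : ℕ) (h : c₂ ≤ k) :
    IsPath r D x (seg iseq c₁ c₂ h) (seg jseq c₁ c₂ h) (seg sseq c₁ c₂ h) := by
  obtain ⟨hmono, hnest, hprev, htarget, hinj⟩ := hP
  refine ⟨fun a b hab => hmono (Fin.mk_lt_mk.2 (by omega)),
    fun a b hab => hnest _ _ (Fin.mk_lt_mk.2 (by omega)),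
    fun b p hpi hpj hell => ?_, fun a => htarget _,
    fun a b hab => Fin.ext (Nat.add_left_cancel (congrArg Fin.val (hinj hab)))⟩
  obtain ⟨a, hab, hja⟩ := hprev _ p hpi hpj hell
  have hab : (a : ℕ) < c₁ + b := hab
  have hc₁a : c₁ ≤ (a : ℕ) := by
    by_contra hlt
    exact (hc₁ a ⟨c₁ + b, by omega⟩ (by omega) (Nat.le_add_right _ _)).not_ge (hja ▸ hpi)
  exact ⟨⟨a - c₁, by omega⟩, by simp only [Fin.lt_def]; omega,
    by simp only [seg, ← hja]; congr 2; omega⟩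

theorem IsPath.isBlockDecomp_cuts (hP : IsPath r D x iseq jseq sseq) :
    IsBlockDecomp r D x iseq jseq sseq (cuts iseq jseq) := by
  refine ⟨fun c hc => (mem_cuts.1 hc).1,
    mem_cuts.2 ⟨k.zero_le, fun _ _ ha _ => absurd ha (Nat.not_lt_zero _)⟩,
    mem_cuts.2 ⟨le_rfl, fun _ b _ hb => absurd b.2 (by omega)⟩, ?_, ?_⟩
  · rintro c₁ c₂ ⟨h₁, h₂, hlt, hno⟩ h
    have hc₁ := (mem_cuts.1 h₁).2
    refine ⟨hP.seg_of_isCut hc₁ c₂ h, fun _ => hP.isLaminar.le_of_no_cut_between hc₁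
      (mem_cuts.1 h₂).2 hlt (fun c hc hc' hcut => hno c (mem_cuts.2 ⟨by omega, hcut⟩) ⟨hc, hc'⟩)
      _ _ rfl (by dsimp only; omega)⟩
  · rintro c₁ c₂ c₃ - ⟨h₂, -⟩ - h₁ q hq hq₂ -
    exact (mem_cuts.1 h₂).2 _ ⟨q, hq⟩ (by dsimp only; omega) hq₂

variable {C : Finset ℕ}

theorem IsBlockDecomp.isCut_of_mem (hC : IsBlockDecomp r D x iseq jseq sseq C)
    (hj : Monotone jseq) {c : ℕ} (hc : c ∈ C) : IsCut iseq jseq c := by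
  obtain ⟨hCk, hC0, hCk', -, hdisj⟩ := hC
  intro a b ha hb
  obtain ⟨d₁, d₂, hd, hd₁, hd₂⟩ := exists_consecutiveIn hC0 hCk' (Nat.zero_le b) b.2
  have hcd₁ : c ≤ d₁ := by
    by_contra h
    exact hd.2.2.2 c hc ⟨by omega, by omega⟩
  obtain ⟨e₁, e₂, he, he₁, he₂⟩ :=
    exists_consecutiveIn hC0 hd.1 (Nat.zero_le (d₁ - 1)) (by omega)
  obtain rfl : e₂ = d₁ := by
    by_contra h
    exact he.2.2.2 d₁ hd.1 ⟨by omega, by omega⟩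
  calc jseq a ≤ jseq ⟨e₂ - 1, by omega⟩ := hj (by simp only [Fin.le_def]; omega)
    _ < iseq b := hdisj e₁ e₂ d₂ he hd (hCk _ hd.1) he.2.2.1 b b.2 hd₁ hd₂

theorem IsBlockDecomp.mem_of_isCut (hC : IsBlockDecomp r D x iseq jseq sseq C)
    (hij : ∀ a, iseq a ≤ jseq a) {c : ℕ} (hck : c ≤ k) (hc : IsCut iseq jseq c) : c ∈ C := by
  obtain ⟨hCk, hC0, hCk', hblock, -⟩ := hC
  by_contra hcC
  have hck' : c < k := lt_of_le_of_ne hck (fun h => hcC (h ▸ hCk'))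
  obtain ⟨d₁, d₂, hd, hd₁, hd₂⟩ := exists_consecutiveIn hC0 hCk' (Nat.zero_le c) hck'
  have hd₁c : d₁ < c := lt_of_le_of_ne hd₁ (fun h => hcC (h ▸ hd.1))
  have hd₂k := hCk _ hd.2.1
  have hindec := (hblock d₁ d₂ hd hd₂k).2 hd.2.2.1
  exact (hc ⟨d₁, by omega⟩ ⟨d₂ - 1, by omega⟩ hd₁c (by dsimp only; omega)).not_ge
    (hindec.trans (hij _))

theorem IsBlockDecomp.eq_cuts (hP : IsPath r D x iseq jseq sseq)
    (hC : IsBlockDecomp r D x iseq jseq sseq C) : C = cuts iseq jseq := by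
  ext c
  exact ⟨fun hc => mem_cuts.2 ⟨hC.1 c hc, hC.isCut_of_mem hP.1.monotone hc⟩,
    fun hc => hC.mem_of_isCut hP.isLaminar.le (mem_cuts.1 hc).1 (mem_cuts.1 hc).2⟩

end Paths

theorem blockDecomposition_existsUnique_general
    (r : ℕ) (D : Finset ℤ) (x : Fin r → ℤ)
    (k : ℕ) (iseq jseq : Fin k → Fin r) (sseq : Fin k → ℤ)
    (hP : IsPath r D x iseq jseq sseq) :
    ∃! C : Finset ℕ, IsBlockDecomp r D x iseq jseq sseq C :=
  ⟨cuts iseq jseq, hP.isBlockDecomp_cuts, fun _ hC => hC.eq_cuts hP⟩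

/-- Every path on `D` can be written in exactly one way as a disjoint sum of
indecomposable paths (its blocks): there is a unique partition of its sequence of left
moves into consecutive segments such that each segment is an indecomposable path and
consecutive segments are disjoint. -/
theorem blockDecomposition_existsUnique
    (r : ℕ) (hr : 1 ≤ r) (D : Finset ℤ) (hD : D.card = r)
    (x : Fin r → ℤ) (hx : StrictMono x) (hxD : ∀ z : ℤ, z ∈ D ↔ ∃ i, x i = z)
    (k : ℕ) (iseq jseq : Fin k → Fin r) (sseq : Fin k → ℤ)
    (hP : IsPath r D x iseq jseq sseq) :
    ∃! C : Finset ℕ, IsBlockDecomp r D x iseq jseq sseq C :=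
  blockDecomposition_existsUnique_general r D x k iseq jseq sseq hP
end

section
/- A nonempty indecomposable path (L_{i_1,j_1}, …, L_{i_k,j_k}) on D has no bridges if and only if the set {j_1, …, j_k} of moved labels equals the whole integer interval [i_0, j_k], where i_0 = min{i_1,…,i_k}; equivalently, if and only if its length k equals its depth j_k − i_0 plus one. -/
/-- The path `(L_{i_a,j_a})_{a<k}` has a bridge: for some `a` and some `b` with
`i_a ≤ b < j_a`, the `b`-th × is not moved in the path. -/
def HasBridge (r : ℕ) {k : ℕ} (iseq jseq : Fin k → Fin r) : Prop :=
  ∃ (a : Fin k) (b : Fin r), iseq a ≤ b ∧ b < jseq a ∧ ∀ c : Fin k, jseq c ≠ b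

/-!
By condition (2) of a path, an indecomposable path ends with a move starting at `i₀`: every
earlier move `L_{i_a,j_a}` has `i_k ≤ i_1 ≤ j_1 ≤ j_a`, hence `i_k ≤ i_a`. So the last move
alone spans `[i₀, j_k]`, and a bridge is just a label of `[i₀, j_k]` that is not moved.
The moved labels `j_1 < ⋯ < j_k` always lie in `[i₀, j_k]`, so they fill it iff there are as
many of them as the interval has elements.
-/

section MoveSequences

variable {ι α : Type*} [LinearOrder ι] [LinearOrder α] {iseq jseq : ι → α} {first last : ι}

theorem iseq_last_le_of_indecomposable (hmono : Monotone jseq)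
    (hnest : ∀ a b, a < b → iseq b ≤ jseq a → iseq b ≤ iseq a)
    (hij : ∀ a, iseq a ≤ jseq a) (hfirst : ∀ a, first ≤ a) (hlast : ∀ a, a ≤ last)
    (hind : iseq last ≤ iseq first) (a : ι) : iseq last ≤ iseq a := by
  rcases (hlast a).eq_or_lt with rfl | ha
  · exact le_rfl
  · exact hnest a last ha <| calc
      iseq last ≤ iseq first := hind
      _ ≤ jseq first := hij first
      _ ≤ jseq a := hmono (hfirst a)

theorem image_subset_Icc_of_le [Fintype ι] [DecidableEq α] [LocallyFiniteOrder α] {i₀ : α}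
    (hmono : Monotone jseq) (hij : ∀ a, iseq a ≤ jseq a) (hmin : ∀ a, i₀ ≤ iseq a)
    (hlast : ∀ a, a ≤ last) :
    Finset.univ.image jseq ⊆ Finset.Icc i₀ (jseq last) := by
  simp only [Finset.subset_iff, Finset.mem_image, Finset.mem_univ, true_and, Finset.mem_Icc,
    forall_exists_index, forall_apply_eq_imp_iff]
  exact fun a => ⟨(hmin a).trans (hij a), hmono (hlast a)⟩

end MoveSequences

section Bridges

variable {r k : ℕ} {iseq jseq : Fin k → Fin r} {i₀ : Fin r} {last : Fin k}

theorem not_hasBridge_iff_image_eq_Icc (hmono : Monotone jseq) (hij : ∀ a, iseq a ≤ jseq a)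
    (hmin : ∀ a, i₀ ≤ iseq a) (hlast : ∀ a, a ≤ last) (hlast_i₀ : iseq last = i₀) :
    ¬ HasBridge r iseq jseq ↔ Finset.univ.image jseq = Finset.Icc i₀ (jseq last) := by
  have hsub := image_subset_Icc_of_le hmono hij hmin hlast
  constructor
  · refine fun hnb => hsub.antisymm fun b hb => ?_
    obtain ⟨hi₀b, hb⟩ := Finset.mem_Icc.mp hb
    rcases hb.eq_or_lt with rfl | hb
    · exact Finset.mem_image_of_mem _ (Finset.mem_univ last)
    · by_contra hnot
      exact hnb ⟨last, b, hlast_i₀ ▸ hi₀b, hb,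
        fun c hc => hnot (hc ▸ Finset.mem_image_of_mem _ (Finset.mem_univ c))⟩
  · rintro heq ⟨a, b, hab, hba, hunmoved⟩
    have hb : b ∈ Finset.univ.image jseq :=
      heq ▸ Finset.mem_Icc.mpr ⟨(hmin a).trans hab, hba.le.trans (hmono (hlast a))⟩
    obtain ⟨c, -, hc⟩ := Finset.mem_image.mp hb
    exact hunmoved c hc

theorem image_eq_Icc_iff_card_eq {j : Fin r} (hinj : Function.Injective jseq)
    (hsub : Finset.univ.image jseq ⊆ Finset.Icc i₀ j) (hi₀j : i₀ ≤ j) :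
    Finset.univ.image jseq = Finset.Icc i₀ j ↔ k = ((j : ℕ) - (i₀ : ℕ)) + 1 := by
  have hi₀j : (i₀ : ℕ) ≤ j := hi₀j
  have hcard : (Finset.univ.image jseq).card = k := by
    rw [Finset.card_image_of_injective _ hinj, Finset.card_univ, Fintype.card_fin]
  have hcard_le := Finset.card_le_card hsub
  rw [hcard, Fin.card_Icc] at hcard_le
  rw [← Finset.eq_iff_card_le_of_subset hsub, hcard, Fin.card_Icc]
  omega

end Bridges

/-- A nonempty indecomposable path on `D` has no bridges iff its set of moved labels
`{j_1,…,j_k}` is the whole interval `[i₀, j_k]` (`i₀ = min {i_1,…,i_k}`), iff its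
length `k` equals its depth `j_k − i₀` plus one. -/
theorem indecomposable_noBridge_iff
    (r : ℕ) (D : Finset ℤ)
    (x : Fin r → ℤ)
    (k : ℕ) (hk : 0 < k)
    (iseq jseq : Fin k → Fin r) (sseq : Fin k → ℤ)
    (hP : IsPath r D x iseq jseq sseq)
    (hind : iseq ⟨k - 1, by omega⟩ ≤ iseq ⟨0, hk⟩)
    (i0 : Fin r) (hi0mem : ∃ a : Fin k, iseq a = i0) (hi0min : ∀ a : Fin k, i0 ≤ iseq a) :
    (¬ HasBridge r iseq jseq ↔
        Finset.univ.image jseq = Finset.Icc i0 (jseq ⟨k - 1, by omega⟩)) ∧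
    (¬ HasBridge r iseq jseq ↔
        k = ((jseq ⟨k - 1, by omega⟩ : ℕ) - (i0 : ℕ)) + 1) := by
  obtain ⟨hmono, hnest, -, htarget, -⟩ := hP
  have hij : ∀ a, iseq a ≤ jseq a := fun a => (htarget a).1
  have hfirst : ∀ a : Fin k, ⟨0, hk⟩ ≤ a := fun a => Fin.mk_le_of_le_val (Nat.zero_le _)
  have hlast : ∀ a : Fin k, a ≤ ⟨k - 1, by omega⟩ := fun a => Fin.le_def.mpr (Nat.le_sub_one_of_lt a.2)
  have hlast_i0 : iseq ⟨k - 1, by omega⟩ = i0 := by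
    obtain ⟨a, rfl⟩ := hi0mem
    exact (iseq_last_le_of_indecomposable hmono.monotone hnest hij hfirst hlast hind a).antisymm
      (hi0min _)
  have hbridge := not_hasBridge_iff_image_eq_Icc hmono.monotone hij hi0min hlast hlast_i0
  refine ⟨hbridge, hbridge.trans (image_eq_Icc_iff_card_eq hmono.injective
    (image_subset_Icc_of_le hmono.monotone hij hi0min hlast) ?_)⟩
  exact (hi0min _).trans (hij _)
end

section
/- There is exactly one path on D of length r, i.e. exactly one path whose set of moved labels is {1, 2, …, r}; it is called the bottom path of D (and corresponds to the bottom composition factor of the Kac module K(λ)). -/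
/-!
Encode the diagram by the walk `height D n = 2 * #{d ∈ D | d < n} - n`, which steps up at
crosses and down at empty vertices. Then `ℓ(s, t) = height t - height (s + 1)`, and the targets
of a vertex `t` are the down-steps `s < t` that end at the level of `t`; let `canonicalTarget D t`
be the rightmost one. In a path of length `r` every cross moves, so `j = id`.

Walking up from any target of a cross `t` to the first cross at its level shows that the target
is the canonical target of some cross `d ≤ t`; as targets are pairwise distinct, induction on the
label forces every target to be canonical, and then `i` is determined. Conversely, canonical
targets are nested like parentheses (a cross `d` with `canonicalTarget D t < d < t` has
`canonicalTarget D t < canonicalTarget D d`), which gives both their distinctness and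
condition (2); condition (3) is automatic when `j = id`.
-/

theorem exists_downcrossing {f : ℤ → ℤ} (hf : ∀ n, f n - 1 ≤ f (n + 1)) {a b c : ℤ}
    (hab : a ≤ b) (hb : f b ≤ c) (ha : c < f a) :
    ∃ w, a ≤ w ∧ w < b ∧ f w = c + 1 ∧ f (w + 1) = c := by
  induction a, hab using Int.leInductionDown with
  | base => omega
  | pred a hab ih =>
    by_cases hc : c < f a
    · obtain ⟨w, haw, hwb, hw⟩ := ih hc
      exact ⟨w, by omega, hwb, hw⟩
    · have := hf (a - 1)
      exact ⟨a - 1, le_rfl, by omega, by rw [sub_add_cancel] at this ⊢; omega⟩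

theorem exists_upcrossing {f : ℤ → ℤ} (hf : ∀ n, f (n + 1) ≤ f n + 1) {a b c : ℤ}
    (hab : a ≤ b) (ha : f a ≤ c) (hb : c < f b) :
    ∃ w, a ≤ w ∧ w < b ∧ f w = c ∧ f (w + 1) = c + 1 := by
  obtain ⟨w, haw, hwb, hw, hw'⟩ :=
    exists_downcrossing (f := fun n => -f n) (c := -c - 1) (fun n => by linarith [hf n]) hab
      (by omega) (by omega)
  exact ⟨w, haw, hwb, by omega, by omega⟩

def countBelow (D : Finset ℤ) (n : ℤ) : ℕ :=
  (D.filter (· < n)).card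

def height (D : Finset ℤ) (n : ℤ) : ℤ :=
  2 * countBelow D n - n

section Height

variable (D : Finset ℤ)

theorem countBelow_mono : Monotone (countBelow D) := fun _ _ hmn =>
  Finset.card_le_card fun _ hz => by
    simp only [Finset.mem_filter] at hz ⊢
    exact ⟨hz.1, hz.2.trans_le hmn⟩

theorem countBelow_add_one (n : ℤ) :
    countBelow D (n + 1) = countBelow D n + if n ∈ D then 1 else 0 := by
  have : D.filter (· < n + 1) = D.filter (· = n) ∪ D.filter (· < n) := by
    rw [← Finset.filter_or]; exact Finset.filter_congr fun z _ => by omega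
  rw [countBelow, countBelow, this, Finset.card_union_of_disjoint, Finset.filter_eq', add_comm]
  · split_ifs <;> simp
  · exact Finset.disjoint_filter.2 fun _ _ h => h.symm ▸ lt_irrefl _

theorem height_add_one (n : ℤ) :
    height D (n + 1) = height D n + if n ∈ D then 1 else -1 := by
  simp only [height, countBelow_add_one]
  split_ifs <;> push_cast <;> ring

theorem height_sub_one_le (n : ℤ) : height D n - 1 ≤ height D (n + 1) := by
  have := height_add_one D n; split_ifs at this <;> omega

theorem height_add_one_le (n : ℤ) : height D (n + 1) ≤ height D n + 1 := by
  have := height_add_one D n; split_ifs at this <;> omega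

theorem crossCount_add_countBelow {s t : ℤ} (hst : s < t) :
    crossCount D s t + countBelow D (s + 1) = countBelow D t := by
  have : D.filter (· < t) = (Finset.Ioo s t).filter (· ∈ D) ∪ D.filter (· < s + 1) := by
    ext z; simp only [Finset.mem_filter, Finset.mem_union, Finset.mem_Ioo]; grind
  rw [countBelow, countBelow, this, Finset.card_union_of_disjoint, crossCount]
  exact Finset.disjoint_left.2 fun z hz hz' => by
    simp only [Finset.mem_filter, Finset.mem_Ioo] at hz hz'; omega

theorem ell_eq_height_sub {s t : ℤ} (hst : s < t) :
    ell D s t = height D t - height D (s + 1) := by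
  have hsplit := Finset.card_filter_add_card_filter_not (s := Finset.Ioo s t) (p := (· ∈ D))
  rw [Int.card_Ioo] at hsplit
  have := crossCount_add_countBelow D hst
  unfold ell height crossCount at *
  omega

end Height

def IsTarget (D : Finset ℤ) (t s : ℤ) : Prop :=
  s ∉ D ∧ s < t ∧ ell D s t = 0

noncomputable def canonicalTarget (D : Finset ℤ) (t : ℤ) : ℤ :=
  sSup {s | IsTarget D t s}

section CanonicalTarget

variable {D : Finset ℤ}

theorem isTarget_iff_height {t s : ℤ} :
    IsTarget D t s ↔ s < t ∧ height D s = height D t + 1 ∧ height D (s + 1) = height D t := by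
  have hstep := height_add_one D s
  constructor
  · rintro ⟨hsD, hst, hell⟩
    rw [ell_eq_height_sub D hst, if_neg hsD] at *
    omega
  · rintro ⟨hst, hs, hs'⟩
    refine ⟨fun hsD => ?_, hst, by rw [ell_eq_height_sub D hst]; omega⟩
    rw [if_pos hsD] at hstep
    omega

theorem exists_isTarget_of_height_lt {a t : ℤ} (hat : a ≤ t) (h : height D t < height D a) :
    ∃ s, a ≤ s ∧ IsTarget D t s := by
  obtain ⟨s, has, hst, hs, hs'⟩ :=
    exists_downcrossing (height_sub_one_le D) hat le_rfl h
  exact ⟨s, has, isTarget_iff_height.2 ⟨hst, hs, hs'⟩⟩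

theorem exists_isTarget (t : ℤ) : ∃ s, IsTarget D t s := by
  have hcount : countBelow D t ≤ D.card := Finset.card_filter_le _ _
  obtain ⟨s, -, hs⟩ := exists_isTarget_of_height_lt (D := D) (a := t - 2 * D.card - 1) (t := t)
    (by omega) (by unfold height; omega)
  exact ⟨s, hs⟩

theorem bddAbove_isTarget (t : ℤ) : BddAbove {s | IsTarget D t s} :=
  ⟨t, fun _ hs => hs.2.1.le⟩

theorem canonicalTarget_isTarget (t : ℤ) : IsTarget D t (canonicalTarget D t) :=
  Int.csSup_mem (exists_isTarget t) (bddAbove_isTarget t)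

theorem le_canonicalTarget {t s : ℤ} (hs : IsTarget D t s) : s ≤ canonicalTarget D t :=
  le_csSup (bddAbove_isTarget t) hs

theorem height_le_of_canonicalTarget_lt {t u : ℤ} (hu : canonicalTarget D t < u) (hut : u ≤ t) :
    height D u ≤ height D t := by
  by_contra! h
  obtain ⟨s, hus, hs⟩ := exists_isTarget_of_height_lt hut h
  exact absurd (le_canonicalTarget hs) (by omega)

theorem canonicalTarget_lt_canonicalTarget {d t : ℤ} (hd : d ∈ D) (hdt : d < t)
    (h : canonicalTarget D t < d) : canonicalTarget D t < canonicalTarget D d := by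
  obtain ⟨-, -, hσ⟩ := isTarget_iff_height.1 (canonicalTarget_isTarget (D := D) t)
  have hball := height_le_of_canonicalTarget_lt (by omega : canonicalTarget D t < d + 1) hdt
  rw [height_add_one, if_pos hd] at hball
  obtain ⟨s, hs, hsd⟩ :=
    exists_isTarget_of_height_lt (D := D) (a := canonicalTarget D t + 1) (t := d) (by omega)
      (by omega)
  exact lt_of_lt_of_le hs (le_canonicalTarget hsd)

theorem canonicalTarget_injOn : Set.InjOn (canonicalTarget D) D := by
  suffices ∀ d ∈ D, ∀ t, d < t → canonicalTarget D d ≠ canonicalTarget D t by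
    intro d hd t ht h
    by_contra hne
    rcases lt_or_gt_of_ne hne with hdt | htd
    · exact this d hd t hdt h
    · exact this t ht d htd h.symm
  intro d hd t hdt h
  have hσd := (canonicalTarget_isTarget (D := D) d).2.1
  rcases lt_or_ge (canonicalTarget D t) d with hlt | hge
  · exact (canonicalTarget_lt_canonicalTarget hd hdt hlt).ne h.symm
  · omega

theorem exists_canonicalTarget_eq {t s : ℤ} (ht : t ∈ D) (hs : IsTarget D t s) :
    ∃ d ∈ D, d ≤ t ∧ canonicalTarget D d = s := by
  rcases (le_canonicalTarget hs).lt_or_eq with hlt | heq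
  · obtain ⟨hst, hs₀, hs₁⟩ := isTarget_iff_height.1 hs
    obtain ⟨hσt, hσ, -⟩ := isTarget_iff_height.1 (canonicalTarget_isTarget (D := D) t)
    -- from `s + 1` to `canonicalTarget D t` the walk rises one level, so it steps up at a cross
    obtain ⟨w, hsw, hwσ, hw, hw'⟩ :=
      exists_upcrossing (height_add_one_le D) (by omega : s + 1 ≤ canonicalTarget D t) le_rfl
        (by omega)
    have hwD : w ∈ D := by
      by_contra hwD
      have := height_add_one D w
      rw [if_neg hwD] at this
      omega
    have hsw' : IsTarget D w s := isTarget_iff_height.2 ⟨by omega, by omega, by omega⟩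
    obtain ⟨d, hd, hdw, hds⟩ := exists_canonicalTarget_eq hwD hsw'
    exact ⟨d, hd, by omega, hds⟩
  · exact ⟨t, ht, le_rfl, heq.symm⟩
termination_by (t - s).toNat
decreasing_by omega

end CanonicalTarget

theorem crossCount_add_countBelow_of_isTarget {D : Finset ℤ} {t s : ℤ} (hs : IsTarget D t s) :
    crossCount D s t + countBelow D s = countBelow D t := by
  have := crossCount_add_countBelow D hs.2.1
  rwa [countBelow_add_one, if_neg hs.1, add_zero] at this

noncomputable def bottomStart (D : Finset ℤ) {r : ℕ} (x : Fin r → ℤ) (b : Fin r) : Fin r :=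
  ⟨b - crossCount D (canonicalTarget D (x b)) (x b), (Nat.sub_le _ _).trans_lt b.isLt⟩

section Enumeration

variable {r : ℕ} {D : Finset ℤ} {x : Fin r → ℤ}
  (hx : StrictMono x) (hxD : ∀ z : ℤ, z ∈ D ↔ ∃ i, x i = z)
include hx hxD

theorem countBelow_apply (b : Fin r) : countBelow D (x b) = b := by
  have : D.filter (· < x b) = (Finset.Iio b).image x := by
    ext z
    simp only [Finset.mem_filter, Finset.mem_image, Finset.mem_Iio, hxD]
    constructor
    · rintro ⟨⟨a, rfl⟩, hab⟩
      exact ⟨a, hx.lt_iff_lt.1 hab, rfl⟩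
    · rintro ⟨a, hab, rfl⟩
      exact ⟨⟨a, rfl⟩, hx hab⟩
  rw [countBelow, this, Finset.card_image_of_injective _ hx.injective, Fin.card_Iio]

theorem crossCount_add_countBelow_apply {b : Fin r} {s : ℤ} (hs : IsTarget D (x b) s) :
    crossCount D s (x b) + countBelow D s = b := by
  rw [crossCount_add_countBelow_of_isTarget hs, countBelow_apply hx hxD]

theorem bottomStart_val (b : Fin r) :
    (bottomStart D x b : ℕ) = countBelow D (canonicalTarget D (x b)) := by
  have := crossCount_add_countBelow_apply hx hxD (canonicalTarget_isTarget (x b))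
  simp only [bottomStart]
  omega

theorem isLeftMoveTarget_bottomStart (b : Fin r) :
    IsLeftMoveTarget r D x (bottomStart D x b) b (canonicalTarget D (x b)) := by
  obtain ⟨hσD, hσ, hell⟩ := canonicalTarget_isTarget (D := D) (x b)
  have := crossCount_add_countBelow_apply hx hxD (canonicalTarget_isTarget (x b))
  refine ⟨Nat.sub_le _ _, hσD, hσ, hell, ?_⟩
  simp only [bottomStart]
  omega

theorem bottomStart_le_bottomStart {a b : Fin r} (hab : a < b)
    (h : bottomStart D x b ≤ a) : bottomStart D x b ≤ bottomStart D x a := by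
  simp only [Fin.le_def, bottomStart_val hx hxD] at h ⊢
  have hxa : x a ∈ D := (hxD _).2 ⟨a, rfl⟩
  -- the target of `x b` lies left of `x a`, since at most `a` crosses lie left of it
  have hlt : canonicalTarget D (x b) < x a := by
    by_contra! hle
    have hne : x a ≠ canonicalTarget D (x b) := fun h =>
      (canonicalTarget_isTarget (x b)).1 (h ▸ hxa)
    have := countBelow_mono D (lt_of_le_of_ne hle hne : x a + 1 ≤ canonicalTarget D (x b))
    rw [countBelow_add_one, if_pos hxa, countBelow_apply hx hxD] at this
    omega
  exact countBelow_mono D (canonicalTarget_lt_canonicalTarget hxa (hx hab) hlt).le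

theorem canonicalTarget_comp_injective : Function.Injective (canonicalTarget D ∘ x) :=
  fun a b h => hx.injective <|
    canonicalTarget_injOn ((hxD _).2 ⟨a, rfl⟩) ((hxD _).2 ⟨b, rfl⟩) h

theorem isPath_bottom :
    IsPath r D x (bottomStart D x) id (canonicalTarget D ∘ x) :=
  ⟨strictMono_id, fun _ _ hab h => bottomStart_le_bottomStart hx hxD hab h,
    fun _ p _ hp _ => ⟨p, hp, rfl⟩, isLeftMoveTarget_bottomStart hx hxD,
    canonicalTarget_comp_injective hx hxD⟩

theorem eq_canonicalTarget_comp {s : Fin r → ℤ} (hs : ∀ b, IsTarget D (x b) (s b))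
    (hinj : Function.Injective s) : s = canonicalTarget D ∘ x := by
  funext b
  induction b using WellFoundedLT.induction with
  | _ b ih =>
    obtain ⟨d, hd, hdb, hds⟩ := exists_canonicalTarget_eq ((hxD _).2 ⟨b, rfl⟩) (hs b)
    obtain ⟨a, rfl⟩ := (hxD d).1 hd
    rcases (hx.le_iff_le.1 hdb).lt_or_eq with hab | rfl
    · exact absurd (hinj ((ih a hab).trans hds).symm) hab.ne'
    · exact hds.symm

theorem eq_bottom_of_isPath {i j : Fin r → Fin r} {s : Fin r → ℤ} (h : IsPath r D x i j s) :
    i = bottomStart D x ∧ j = id ∧ s = canonicalTarget D ∘ x := by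
  obtain ⟨hj, -, -, hmove, hinj⟩ := h
  obtain rfl : j = id := hj.eq_id
  have hs : s = canonicalTarget D ∘ x := eq_canonicalTarget_comp hx hxD
    (fun b => ⟨(hmove b).2.1, (hmove b).2.2.1, (hmove b).2.2.2.1⟩) hinj
  refine ⟨funext fun b => Fin.ext ?_, rfl, hs⟩
  obtain ⟨hib, -, -, -, hcross⟩ := hmove b
  simp only [id_eq, hs, Function.comp_apply, Fin.le_def] at hib hcross
  simp only [bottomStart]
  omega

end Enumeration

theorem bottomPath_existsUnique_general
    (r : ℕ) (D : Finset ℤ)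
    (x : Fin r → ℤ) (hx : StrictMono x) (hxD : ∀ z : ℤ, z ∈ D ↔ ∃ i, x i = z) :
    ∃! P : (Fin r → Fin r) × (Fin r → Fin r) × (Fin r → ℤ),
      IsPath r D x P.1 P.2.1 P.2.2 := by
  refine ⟨(bottomStart D x, id, canonicalTarget D ∘ x), isPath_bottom hx hxD, ?_⟩
  rintro ⟨i, j, s⟩ h
  obtain ⟨rfl, rfl, rfl⟩ := eq_bottom_of_isPath hx hxD h
  rfl

/-- There is exactly one path on `D` of length `r`, i.e. exactly one path whose set of
moved labels is all of `{1,…,r}`: the bottom path of `D`. -/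
theorem bottomPath_existsUnique
    (r : ℕ) (hr : 1 ≤ r) (D : Finset ℤ) (hD : D.card = r)
    (x : Fin r → ℤ) (hx : StrictMono x) (hxD : ∀ z : ℤ, z ∈ D ↔ ∃ i, x i = z) :
    ∃! P : (Fin r → Fin r) × (Fin r → Fin r) × (Fin r → ℤ),
      IsPath r D x P.1 P.2.1 P.2.2 :=
  bottomPath_existsUnique_general r D x hx hxD
end

section
/- Let (L_{i_1,j_1}, …, L_{i_k,j_k}) be a path on D with targets s_1, …, s_k, and let D′ = (D \ {x_{j_1},…,x_{j_k}}) ∪ {s_1,…,s_k} be its resulting diagram. Then |D′| = r, and writing x′_1 < x′_2 < ⋯ < x′_r for the elements of D′, one has x′_a ≤ x_a for every 1 ≤ a ≤ r. (In terms of weights: the weight μ corresponding to a path of λ satisfies μ ≼ λ in the partial order where μ ≼ λ iff every coordinate of μ is at most the corresponding coordinate of λ.) -/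
/-- The resulting diagram of a path: delete the ×'s at the moved vertices `x_{j_a}` and
place ×'s at the targets `s_a`. -/
def resultDiagram (r : ℕ) (D : Finset ℤ) (x : Fin r → ℤ) {k : ℕ}
    (jseq : Fin k → Fin r) (sseq : Fin k → ℤ) : Finset ℤ :=
  (D \ Finset.univ.image (fun a => x (jseq a))) ∪ Finset.univ.image sseq

open Finset Function

namespace Finset

section Exchange

variable {α ι : Type*} [DecidableEq α]

theorem card_filter_sdiff_union_add_card_filter {D M S : Finset α} (hMD : M ⊆ D)
    (hSD : Disjoint S D) (p : α → Prop) [DecidablePred p] :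
    #(((D \ M) ∪ S).filter p) + #(M.filter p) = #(D.filter p) + #(S.filter p) := by
  have hsplit : ((D \ M) ∪ S).filter p = (D.filter p \ M.filter p) ∪ S.filter p := by
    ext z
    simp only [mem_filter, mem_union, mem_sdiff]
    tauto
  have hdisj : Disjoint (D.filter p \ M.filter p) (S.filter p) :=
    (disjoint_filter_filter hSD).symm.mono_left sdiff_subset
  rw [hsplit, card_union_of_disjoint hdisj]
  have := card_sdiff_add_card_eq_card (filter_subset_filter p hMD)
  omega

variable [Fintype ι] {D : Finset α} {m s : ι → α}

theorem card_filter_image_le_of_imp (hs : Injective s) (p : α → Prop) [DecidablePred p]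
    (hps : ∀ i, p (m i) → p (s i)) :
    #((univ.image m).filter p) ≤ #((univ.image s).filter p) := by
  rw [filter_image, filter_image, card_image_of_injective _ hs]
  exact card_image_le.trans (card_le_card (monotone_filter_right _ fun i _ => hps i))

theorem image_subset_of_forall_mem (hmD : ∀ i, m i ∈ D) : univ.image m ⊆ D := by
  simpa [image_subset_iff] using hmD

theorem disjoint_image_of_forall_notMem (hsD : ∀ i, s i ∉ D) : Disjoint (univ.image s) D := by
  simpa [disjoint_left] using hsD

theorem card_sdiff_image_union_image (hm : Injective m) (hs : Injective s)
    (hmD : ∀ i, m i ∈ D) (hsD : ∀ i, s i ∉ D) :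
    #((D \ univ.image m) ∪ univ.image s) = #D := by
  have := card_filter_sdiff_union_add_card_filter (image_subset_of_forall_mem hmD)
    (disjoint_image_of_forall_notMem hsD) (fun _ => True)
  simp only [filter_true, card_image_of_injective _ hm, card_image_of_injective _ hs] at this
  omega

theorem card_filter_le_le_card_filter_sdiff_image_union_image [LinearOrder α]
    (hs : Injective s) (hmD : ∀ i, m i ∈ D) (hsD : ∀ i, s i ∉ D) (hsm : ∀ i, s i ≤ m i)
    (t : α) : #(D.filter (· ≤ t)) ≤ #(((D \ univ.image m) ∪ univ.image s).filter (· ≤ t)) := by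
  have := card_filter_sdiff_union_add_card_filter (image_subset_of_forall_mem hmD)
    (disjoint_image_of_forall_notMem hsD) (· ≤ t)
  have := card_filter_image_le_of_imp hs (· ≤ t) fun i => (hsm i).trans
  omega

end Exchange

section Enumeration

variable {α : Type*} [LinearOrder α] {r : ℕ} {D : Finset α} {x : Fin r → α}

theorem eq_univ_image_of_forall_mem_iff (hxD : ∀ z, z ∈ D ↔ ∃ i, x i = z) :
    D = univ.image x := by
  ext z
  simp [hxD]

theorem card_filter_le_apply (hx : StrictMono x) (hxD : ∀ z, z ∈ D ↔ ∃ i, x i = z)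
    (a : Fin r) : #(D.filter (· ≤ x a)) = a + 1 := by
  rw [eq_univ_image_of_forall_mem_iff hxD, filter_image, card_image_of_injective _ hx.injective]
  have hIic : univ.filter (fun i => x i ≤ x a) = Iic a := by
    ext i
    simp [hx.le_iff_le]
  rw [hIic, Fin.card_Iic]

theorem card_filter_le_le_of_lt_apply (hx : StrictMono x) (hxD : ∀ z, z ∈ D ↔ ∃ i, x i = z)
    {a : Fin r} {t : α} (ht : t < x a) : #(D.filter (· ≤ t)) ≤ a := by
  rw [eq_univ_image_of_forall_mem_iff hxD, filter_image, ← Fin.card_Iio]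
  refine card_image_le.trans (card_le_card fun i hi => ?_)
  rw [mem_filter] at hi
  exact mem_Iio.2 (hx.lt_iff_lt.1 (hi.2.trans_lt ht))

theorem apply_le_of_card_filter_le {D' : Finset α} {x' : Fin r → α} (hx : StrictMono x)
    (hxD : ∀ z, z ∈ D ↔ ∃ i, x i = z) (hx' : StrictMono x') (hx'D : ∀ z, z ∈ D' ↔ ∃ i, x' i = z)
    (hcount : ∀ t, #(D.filter (· ≤ t)) ≤ #(D'.filter (· ≤ t))) (a : Fin r) : x' a ≤ x a := by
  by_contra! h
  have hD' := card_filter_le_le_of_lt_apply hx' hx'D h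
  have hD := hcount (x a)
  rw [card_filter_le_apply hx hxD] at hD
  omega

end Enumeration

end Finset

theorem resultDiagram_card_and_le_general
    (r : ℕ) (D : Finset ℤ) (hD : D.card = r)
    (x : Fin r → ℤ) (hx : StrictMono x) (hxD : ∀ z : ℤ, z ∈ D ↔ ∃ i, x i = z)
    (k : ℕ) (iseq jseq : Fin k → Fin r) (sseq : Fin k → ℤ)
    (hP : IsPath r D x iseq jseq sseq) :
    (resultDiagram r D x jseq sseq).card = r ∧
    ∀ x' : Fin r → ℤ, StrictMono x' →
      (∀ z : ℤ, z ∈ resultDiagram r D x jseq sseq ↔ ∃ a, x' a = z) →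
      ∀ a : Fin r, x' a ≤ x a := by
  obtain ⟨hj, -, -, htarget, hs⟩ := hP
  have hm : Injective fun b => x (jseq b) := hx.injective.comp hj.injective
  have hmD : ∀ b, x (jseq b) ∈ D := fun b => (hxD _).2 ⟨_, rfl⟩
  have hsD : ∀ b, sseq b ∉ D := fun b => (htarget b).2.1
  have hsm : ∀ b, sseq b ≤ x (jseq b) := fun b => (htarget b).2.2.1.le
  refine ⟨(card_sdiff_image_union_image hm hs hmD hsD).trans hD, fun x' hx' hx'D => ?_⟩
  exact apply_le_of_card_filter_le hx hxD hx' hx'D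
    (card_filter_le_le_card_filter_sdiff_image_union_image hs hmD hsD hsm)

/-- The resulting diagram `D′` of a path on `D` has exactly `r` elements, and its
elements `x′_1 < ⋯ < x′_r` satisfy `x′_a ≤ x_a` for every `a`; i.e. the weight
corresponding to a path of `λ` satisfies `μ ≼ λ` coordinatewise. -/
theorem resultDiagram_card_and_le
    (r : ℕ) (hr : 1 ≤ r) (D : Finset ℤ) (hD : D.card = r)
    (x : Fin r → ℤ) (hx : StrictMono x) (hxD : ∀ z : ℤ, z ∈ D ↔ ∃ i, x i = z)
    (k : ℕ) (iseq jseq : Fin k → Fin r) (sseq : Fin k → ℤ)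
    (hP : IsPath r D x iseq jseq sseq) :
    (resultDiagram r D x jseq sseq).card = r ∧
    ∀ x' : Fin r → ℤ, StrictMono x' →
      (∀ z : ℤ, z ∈ resultDiagram r D x jseq sseq ↔ ∃ a, x' a = z) →
      ∀ a : Fin r, x' a ≤ x a :=
  resultDiagram_card_and_le_general r D hD x hx hxD k iseq jseq sseq hP
end
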